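/- The canonical 3D drawing C(T) of an n-vertex rooted tree T lies in the box [0, rpw(T)−1] × {0} × [0, n−1]: every vertex has y-coordinate 0, x-coordinate between 0 and rpw(T)−1, and z-coordinate between 0 and n−1, with the root at the origin. -/

import Mathlib

/-- Rooted trees. -/
inductive RTree where
  | node : List RTree → RTree

/-- Number of vertices. -/
def RTree.size : RTree → ℕ
  | .node ts => 1 + (ts.attach.map (fun x => RTree.size x.1)).sum
decreasing_by
  have := List.sizeOf_lt_of_mem x.2
  simp [RTree.node.sizeOf_spec]
  omega

/-- Rooted pathwidth. -/
def RTree.rpw : RTree → ℕ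
  | .node ts =>
    let ks := ts.attach.map (fun x => RTree.rpw x.1)
    let k := ks.foldr max 0
    if ks.count k = 1 then k else k + 1
decreasing_by
  have := List.sizeOf_lt_of_mem x.2
  simp [RTree.node.sizeOf_spec]
  omega

/-- The canonical 3D drawing `C(T)`, as the list of the integer positions
`(x, y, z)` of the vertices (root first, at the origin): the heavy child `c`
(a child of maximum rooted pathwidth) continues the heavy path, translated by
`(0, 0, |T| − |T(c)|)`; the light children are placed at `x`-offset `1` and
stacked vertically starting at `z`-offset `1`, consecutive light subtrees being
shifted by the sizes of the previous ones; light subtrees are drawn recursively. -/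
def RTree.posList : RTree → List (ℤ × ℤ × ℤ)
  | .node ts =>
    match h : ts.dropWhile (fun t => t.rpw ≠ (ts.map RTree.rpw).foldr max 0) with
    | [] => [(0, 0, 0)]
    | c :: rest =>
      let lights := ts.takeWhile (fun t => t.rpw ≠ (ts.map RTree.rpw).foldr max 0)
        ++ rest
      let zs : List ℕ := (lights.map RTree.size).scanl (· + ·) 1
      (0, 0, 0) ::
        ((RTree.posList c).map (fun p =>
          (p.1, p.2.1, p.2.2 + ((RTree.size (.node ts) : ℤ) - (RTree.size c : ℤ)))) ++
        (lights.attach.zip zs).flatMap (fun x =>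
          (RTree.posList x.1.1).map (fun p =>
            (p.1 + 1, p.2.1, p.2.2 + (x.2 : ℤ)))))
decreasing_by
  · have hc : c ∈ ts :=
      (List.dropWhile_sublist _).mem (h ▸ List.mem_cons_self (a := c) (l := rest))
    have := List.sizeOf_lt_of_mem hc
    simp [RTree.node.sizeOf_spec]
    omega
  · have hmem : x.1.1 ∈ ts := by
      have h1 := x.1.2
      rcases List.mem_append.mp h1 with ha | hb
      · exact (List.takeWhile_sublist _).mem ha
      · exact (List.dropWhile_sublist _).mem (h ▸ List.mem_cons_of_mem c hb)
    have := List.sizeOf_lt_of_mem hmem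
    simp [RTree.node.sizeOf_spec]
    omega


/-!
Induction along the recursion of the drawing. The heavy child `c` keeps its `x`-range, which
fits because `rpw c ≤ rpw T`, and is lifted by `|T| - |T(c)|`, so its `z`-range becomes
`[|T| - |T(c)|, |T| - 1]`. A light child `t` is moved one unit in `x`, which fits because
`rpw t < rpw T`; its `z`-offset is `1` plus the sizes of the light subtrees before it, so the
light subtrees lie in `[1, |T| - |T(c)| - 1]`.
-/

namespace List

lemma not_of_dropWhile_eq_cons {α : Type*} {p : α → Bool} {l rest : List α} {c : α}
    (h : l.dropWhile p = c :: rest) : p c = false := by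
  simpa [h] using head_dropWhile_not p (l := l) (by simp [h])

lemma count_eq_zero_of_count_append_cons_eq_one {α : Type*} [BEq α] [LawfulBEq α]
    {l₁ l₂ : List α} {a : α} (h : (l₁ ++ a :: l₂).count a = 1) : l₂.count a = 0 := by
  simp only [count_append, count_cons_self] at h
  omega

lemma le_snd_and_snd_add_fst_le_of_mem_zip_scanl :
    ∀ {L : List ℕ} {a : ℕ} {x : ℕ × ℕ}, x ∈ L.zip (L.scanl (· + ·) a) →
      a ≤ x.2 ∧ x.2 + x.1 ≤ a + L.sum
  | [], _, _, hx => by simp at hx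
  | b :: L, a, x, hx => by
    rw [scanl_cons, zip_cons_cons, mem_cons] at hx
    rcases hx with rfl | hx
    · simp
    · have := le_snd_and_snd_add_fst_le_of_mem_zip_scanl hx
      simp only [sum_cons]
      omega

lemma le_snd_and_snd_add_le_of_mem_attach_zip_scanl {α : Type*} {l : List α} (f : α → ℕ)
    {a : ℕ} {x : {y // y ∈ l} × ℕ} (hx : x ∈ l.attach.zip ((l.map f).scanl (· + ·) a)) :
    a ≤ x.2 ∧ x.2 + f x.1 ≤ a + (l.map f).sum := by
  have hx' := mem_map_of_mem (f := Prod.map (f ∘ Subtype.val) id) hx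
  rw [← zip_map_left, ← map_map, attach_map_subtype_val] at hx'
  exact le_snd_and_snd_add_fst_le_of_mem_zip_scanl hx'

end List

def InBox (w h : ℕ) (p : ℤ × ℤ × ℤ) : Prop :=
  p.2.1 = 0 ∧ 0 ≤ p.1 ∧ p.1 ≤ (w : ℤ) - 1 ∧ 0 ≤ p.2.2 ∧ p.2.2 ≤ (h : ℤ) - 1

lemma inBox_zero {w h : ℕ} (hw : 1 ≤ w) (hh : 1 ≤ h) : InBox w h (0, 0, 0) :=
  ⟨rfl, le_rfl, by dsimp; omega, le_rfl, by dsimp; omega⟩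

lemma InBox.translate {w h W H : ℕ} {p : ℤ × ℤ × ℤ} (hp : InBox w h p) {dx dz : ℤ}
    (hx : 0 ≤ dx) (hz : 0 ≤ dz) (hw : dx + w ≤ W) (hh : dz + h ≤ H) :
    InBox W H (p.1 + dx, p.2.1, p.2.2 + dz) := by
  obtain ⟨h1, h2, h3, h4, h5⟩ := hp
  refine ⟨h1, ?_, ?_, ?_, ?_⟩ <;> dsimp only <;> omega

namespace RTree

lemma size_node (ts : List RTree) : (node ts).size = 1 + (ts.map size).sum := by
  simp [size]

lemma one_le_size (T : RTree) : 1 ≤ T.size := by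
  cases T with
  | node ts => rw [size_node]; omega

lemma size_node_of_dropWhile_eq_cons {p : RTree → Bool} {ts rest : List RTree} {c : RTree}
    (h : ts.dropWhile p = c :: rest) :
    (node ts).size = 1 + ((ts.takeWhile p ++ rest).map size).sum + c.size := by
  conv_lhs => rw [← List.takeWhile_append_dropWhile (p := p) (l := ts), h]
  simp only [size_node, List.map_append, List.map_cons, List.sum_append, List.sum_cons]
  omega

lemma rpw_node (ts : List RTree) :
    (node ts).rpw =
      if (ts.map rpw).count ((ts.map rpw).foldr max 0) = 1 then (ts.map rpw).foldr max 0
      else (ts.map rpw).foldr max 0 + 1 := by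
  simp [rpw]

lemma rpw_le_rpw_node {ts : List RTree} {t : RTree} (ht : t ∈ ts) : t.rpw ≤ (node ts).rpw := by
  have : t.rpw ≤ (ts.map rpw).foldr max 0 := List.le_max_of_le' 0 (List.mem_map_of_mem ht) le_rfl
  rw [rpw_node]
  split <;> omega

theorem one_le_rpw : ∀ T : RTree, 1 ≤ T.rpw
  | node [] => by simp [rpw_node]
  | node (t :: ts) => (one_le_rpw t).trans (rpw_le_rpw_node List.mem_cons_self)

/-- Either the maximum `K` of the children's `rpw` is attained by the heavy child alone, so a
light child has `rpw < K`, or the parent's `rpw` is `K + 1`. -/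
lemma rpw_lt_rpw_node_of_light {ts rest : List RTree} {c t : RTree}
    (h : ts.dropWhile (fun t => t.rpw ≠ (ts.map rpw).foldr max 0) = c :: rest)
    (ht : t ∈ ts.takeWhile (fun t => t.rpw ≠ (ts.map rpw).foldr max 0) ++ rest) :
    t.rpw < (node ts).rpw := by
  set K := (ts.map rpw).foldr max 0 with hK
  have hts := List.takeWhile_append_dropWhile (p := fun t => decide (t.rpw ≠ K)) (l := ts)
  rw [h] at hts
  replace ht := List.mem_append.mp ht
  have htts : t ∈ ts := hts ▸ List.mem_append.mpr (ht.imp id (List.mem_cons_of_mem c))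
  have htK : t.rpw ≤ K := List.le_max_of_le' 0 (List.mem_map_of_mem htts) le_rfl
  rw [rpw_node, ← hK]
  split
  case isFalse => omega
  case isTrue hcount =>
    suffices t.rpw ≠ K by omega
    rcases ht with ht | ht
    · simpa using List.mem_takeWhile_imp ht
    · have hc : c.rpw = K := by simpa using List.not_of_dropWhile_eq_cons h
      rw [← hts, List.map_append, List.map_cons, hc] at hcount
      intro htK
      have := List.count_eq_zero_of_count_append_cons_eq_one hcount
      rw [List.count_eq_zero] at this
      exact this (htK ▸ List.mem_map_of_mem ht)

lemma posList_of_dropWhile_eq_nil {ts : List RTree}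
    (h : ts.dropWhile (fun t => t.rpw ≠ (ts.map rpw).foldr max 0) = []) :
    (node ts).posList = [(0, 0, 0)] := by
  rw [posList]
  split
  · rfl
  · rename_i h'
    rw [h] at h'
    cases h'

lemma posList_of_dropWhile_eq_cons {ts rest : List RTree} {c : RTree}
    (h : ts.dropWhile (fun t => t.rpw ≠ (ts.map rpw).foldr max 0) = c :: rest) :
    (node ts).posList =
      (0, 0, 0) ::
        (c.posList.map (fun p => (p.1, p.2.1, p.2.2 + ((node ts).size - c.size : ℤ))) ++
        ((ts.takeWhile (fun t => t.rpw ≠ (ts.map rpw).foldr max 0) ++ rest).attach.zip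
            (((ts.takeWhile (fun t => t.rpw ≠ (ts.map rpw).foldr max 0) ++ rest).map size).scanl
              (· + ·) 1)).flatMap
          (fun x => x.1.1.posList.map (fun p => (p.1 + 1, p.2.1, p.2.2 + ((x.2 : ℕ) : ℤ))))) := by
  rw [posList]
  split
  · rename_i h'
    rw [h] at h'
    cases h'
  · rename_i h'
    rw [h] at h'
    cases h'
    rfl

theorem inBox_of_mem_posList (T : RTree) : ∀ p ∈ T.posList, InBox T.rpw T.size p := by
  induction T using posList.induct with
  | case1 ts h =>
    rw [posList_of_dropWhile_eq_nil h]
    simpa using inBox_zero (one_le_rpw _) (one_le_size _)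
  | case2 ts c rest h lights ih_heavy ih_light =>
    have hsize := size_node_of_dropWhile_eq_cons h
    have hc_mem : c ∈ ts := (List.dropWhile_sublist _).mem (h ▸ List.mem_cons_self)
    rw [posList_of_dropWhile_eq_cons h]
    intro p hp
    simp only [List.mem_cons, List.mem_append, List.mem_map, List.mem_flatMap] at hp
    rcases hp with rfl | ⟨q, hq, rfl⟩ | ⟨x, hx, q, hq, rfl⟩
    · exact inBox_zero (one_le_rpw _) (one_le_size _)
    · have hc_rpw : (c.rpw : ℤ) ≤ (node ts).rpw := by exact_mod_cast rpw_le_rpw_node hc_mem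
      simpa using (ih_heavy q hq).translate le_rfl (by omega) (by simpa using hc_rpw) (by omega)
    · have hx_rpw := rpw_lt_rpw_node_of_light h x.1.2
      have hx_size := List.le_snd_and_snd_add_le_of_mem_attach_zip_scanl size hx
      exact (ih_light x q hq).translate zero_le_one (by positivity) (by omega) (by omega)

lemma posList_head? (T : RTree) : T.posList.head? = some (0, 0, 0) := by
  cases T
  rw [posList]
  split <;> rfl

end RTree

/-- the canonical 3D drawing of an `n`-vertex rooted tree `T` has
its root at the origin and lies in the box `[0, rpw T − 1] × {0} × [0, n − 1]`. -/
theorem stmt_13 (T : RTree) :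
    T.posList.head? = some (0, 0, 0) ∧
    ∀ p ∈ T.posList, p.2.1 = 0 ∧
      0 ≤ p.1 ∧ p.1 ≤ (T.rpw : ℤ) - 1 ∧
      0 ≤ p.2.2 ∧ p.2.2 ≤ (T.size : ℤ) - 1 :=
  ⟨T.posList_head?, T.inBox_of_mem_posList⟩
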